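/- arXiv:2604.26699 — 7 statements merged into one kernel-verified Lean document; each statement's English description precedes it below -/
import Mathlib

section
/- Let t ∈ (0,1) and let I ⊆ ℝ be a nonempty open interval. If f : I → ℝ satisfies f(tx + (1-t)y) = t·f(x) + (1-t)·f(y) for all x, y ∈ I with x ≤ y, then for every p ∈ I there exists r > 0 such that (p - r, p + r) ⊆ I and f(tx + (1-t)y) = t·f(x) + (1-t)·f(y) for all x, y ∈ (p - r, p + r) (without any order restriction). -/
/-! For `y ≤ x`, restrict `f` to the line `l ↦ y + l (x - y)`. Six instances of the ordered
identity, between points with parameters in `[-(1-t), (1-t)⁻¹]`, combine linearly into the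
reversed one. Since `I` is an open interval, that whole stretched segment lies in `I` as soon as
`x` and `y` are close enough to `p`. -/

open Set Filter Topology

def NonsymTAffineOn (t : ℝ) (S : Set ℝ) (f : ℝ → ℝ) : Prop :=
  ∀ x ∈ S, ∀ y ∈ S, x ≤ y → f (t*x + (1-t)*y) = t * f x + (1-t) * f y

namespace NonsymTAffineOn

variable {t : ℝ} {S : Set ℝ} {f : ℝ → ℝ}

theorem mono {T : Set ℝ} (hf : NonsymTAffineOn t T f) (hST : S ⊆ T) : NonsymTAffineOn t S f :=
  fun x hx y hy hxy => hf x (hST hx) y (hST hy) hxy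

theorem comp_affine (hf : NonsymTAffineOn t S f) (y : ℝ) {d : ℝ} (hd : 0 ≤ d) :
    NonsymTAffineOn t ((fun l => y + l * d) ⁻¹' S) (fun l => f (y + l * d)) := by
  intro a ha b hb hab
  have hmid : y + (t * a + (1 - t) * b) * d = t * (y + a * d) + (1 - t) * (y + b * d) := by ring
  simp only [hmid]
  exact hf _ ha _ hb (by nlinarith)

theorem apply_one_zero (ht : t ∈ Ioo 0 1)
    (hg : NonsymTAffineOn t (Icc (-(1 - t)) (1 - t)⁻¹) f) :
    f t = t * f 1 + (1 - t) * f 0 := by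
  obtain ⟨ht0, ht1⟩ := ht
  set s := 1 - t
  have hs : 0 < s := by linarith
  have hinv : 1 ≤ s⁻¹ := one_le_inv₀ hs |>.2 (by linarith)
  have ordered : ∀ a b c, a ∈ Icc (-s) s⁻¹ → b ∈ Icc (-s) s⁻¹ → a ≤ b → t * a + s * b = c →
      f c = t * f a + s * f b := by
    rintro a b c ha hb hab rfl
    exact hg a ha b hb hab
  have m_neg : -s ∈ Icc (-s) s⁻¹ := ⟨le_rfl, by linarith⟩
  have m_zero : (0 : ℝ) ∈ Icc (-s) s⁻¹ := ⟨by linarith, by linarith⟩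
  have m_s : s ∈ Icc (-s) s⁻¹ := ⟨by linarith, by linarith⟩
  have m_t : t ∈ Icc (-s) s⁻¹ := ⟨by linarith, by linarith⟩
  have m_one : (1 : ℝ) ∈ Icc (-s) s⁻¹ := ⟨by linarith, hinv⟩
  have m_inv : s⁻¹ ∈ Icc (-s) s⁻¹ := ⟨by linarith, le_rfl⟩
  have E1 : f s = t * f 0 + s * f 1 := ordered _ _ _ m_zero m_one (by norm_num) (by ring)
  have E2 : f (s * s) = t * f 0 + s * f s := ordered _ _ _ m_zero m_s hs.le (by ring)
  have E3 : f (s * s) = t * f (-s) + s * f 1 := ordered _ _ _ m_neg m_one (by linarith) (by ring)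
  have E4 : f 1 = t * f 0 + s * f s⁻¹ :=
    ordered _ _ _ m_zero m_inv (by positivity) (by field_simp; ring)
  have E5 : f (1 - t * s) = t * f (-s) + s * f s⁻¹ :=
    ordered _ _ _ m_neg m_inv (by linarith) (by field_simp; ring)
  have E6 : f (1 - t * s) = t * f t + s * f 1 := ordered _ _ _ m_t m_one ht1.le (by ring)
  refine mul_left_cancel₀ ht0.ne' ?_
  linear_combination E5 - E6 - E3 - E4 + E2 + s * E1

theorem apply_swap (ht : t ∈ Ioo 0 1) (hf : NonsymTAffineOn t S f) {x y : ℝ} (hyx : y ≤ x)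
    (hS : Icc (y - (1 - t) * (x - y)) (y + (x - y) / (1 - t)) ⊆ S) :
    f (t*x + (1-t)*y) = t * f x + (1-t) * f y := by
  have hd : 0 ≤ x - y := sub_nonneg.2 hyx
  have hsub : Icc (-(1 - t)) (1 - t)⁻¹ ⊆ (fun l => y + l * (x - y)) ⁻¹' S := by
    rintro l ⟨hl₁, hl₂⟩
    apply hS
    constructor
    · nlinarith
    · rw [div_eq_mul_inv, mul_comm (x - y)]
      nlinarith
  have key := apply_one_zero ht ((hf.comp_affine y hd).mono hsub)
  simp only [one_mul, zero_mul, add_zero, add_sub_cancel] at key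
  rw [← key]
  congr 1
  ring

end NonsymTAffineOn

theorem stmt_0_general (t : ℝ) (ht : t ∈ Set.Ioo (0:ℝ) 1)
    (I : Set ℝ) (hI : IsOpen I) (hord : I.OrdConnected)
    (f : ℝ → ℝ)
    (h : ∀ x ∈ I, ∀ y ∈ I, x ≤ y → f (t*x + (1-t)*y) = t * f x + (1-t) * f y) :
    ∀ p ∈ I, ∃ r > 0, Set.Ioo (p - r) (p + r) ⊆ I ∧
      ∀ x ∈ Set.Ioo (p - r) (p + r), ∀ y ∈ Set.Ioo (p - r) (p + r),
        f (t*x + (1-t)*y) = t * f x + (1-t) * f y := by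
  intro p hp
  have near : ∀ φ : ℝ × ℝ → ℝ, Continuous φ → φ (p, p) = p → ∀ᶠ z in 𝓝 (p, p), φ z ∈ I :=
    fun φ hφ hφp => hφ.continuousAt.eventually_mem (by rw [hφp]; exact hI.mem_nhds hp)
  have hev : ∀ᶠ z : ℝ × ℝ in 𝓝 (p, p), z.1 ∈ I ∧ z.2 ∈ I ∧
      z.2 - (1 - t) * (z.1 - z.2) ∈ I ∧ z.2 + (z.1 - z.2) / (1 - t) ∈ I :=
    (near _ continuous_fst rfl).and <| (near _ continuous_snd rfl).and <|
      (near _ (by fun_prop) (by ring)).and (near _ (by fun_prop) (by simp))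
  obtain ⟨r, hr, hball⟩ := Metric.eventually_nhds_iff_ball.mp hev
  have hmem : ∀ x ∈ Ioo (p - r) (p + r), ∀ y ∈ Ioo (p - r) (p + r),
      (x, y) ∈ Metric.ball (p, p) r :=
    fun x hx y hy => by rw [← ball_prod_same, Real.ball_eq_Ioo]; exact ⟨hx, hy⟩
  refine ⟨r, hr, fun x hx => (hball _ (hmem x hx x hx)).1, fun x hx y hy => ?_⟩
  obtain ⟨hxI, hyI, hlo, hhi⟩ := hball _ (hmem x hx y hy)
  rcases le_total x y with hxy | hyx
  · exact h x hxI y hyI hxy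
  · exact NonsymTAffineOn.apply_swap ht h hyx (hord.out hlo hhi)

theorem stmt_0 (t : ℝ) (ht : t ∈ Set.Ioo (0:ℝ) 1)
    (I : Set ℝ) (hI : IsOpen I) (hne : I.Nonempty) (hord : I.OrdConnected)
    (f : ℝ → ℝ)
    (h : ∀ x ∈ I, ∀ y ∈ I, x ≤ y → f (t*x + (1-t)*y) = t * f x + (1-t) * f y) :
    ∀ p ∈ I, ∃ r > 0, Set.Ioo (p - r) (p + r) ⊆ I ∧
      ∀ x ∈ Set.Ioo (p - r) (p + r), ∀ y ∈ Set.Ioo (p - r) (p + r),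
        f (t*x + (1-t)*y) = t * f x + (1-t) * f y :=
  stmt_0_general t ht I hI hord f h
end

section
/- Let t ∈ (0,1), let I ⊆ ℝ be an interval, and let f : I → ℝ. If for each point p ∈ I there exists an open set U ⊆ ℝ with p ∈ U such that f(tx + (1-t)y) ≤ t·f(x) + (1-t)·f(y) for all x, y ∈ I ∩ U, then f(tx + (1-t)y) ≤ t·f(x) + (1-t)·f(y) for all x, y ∈ I. -/
/-!
Cover `[x, y]` by the open sets of the hypothesis; a Lebesgue number `δ` of this cover makes `f`
`t`-convex on all pairs at distance `< δ`. This scale can be enlarged by the factor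
`(1 - t(1 - t)) / max t (1 - t) > 1`: for a pair `x, y` there are points `u, v` of `[x, y]` with
`u = t x + (1 - t) v`, `v = t u + (1 - t) y` and `t v + (1 - t) u = t x + (1 - t) y`, while the
pairs `(x, v)`, `(u, y)`, `(v, u)` are shorter than `(x, y)` by that factor. Adding the three
`t`-convexity inequalities for these pairs, the terms `f u` and `f v` cancel. Iterating covers
every pair of `[x, y]`.
-/

open Set Metric

variable {E : Type*} [NormedAddCommGroup E] [NormedSpace ℝ E]

def TConvexOn (t : ℝ) (s : Set E) (f : E → ℝ) : Prop :=
  ∀ x ∈ s, ∀ y ∈ s, f (t • x + (1 - t) • y) ≤ t * f x + (1 - t) * f y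

def TConvexOnScale (t δ : ℝ) (s : Set E) (f : E → ℝ) : Prop :=
  ∀ x ∈ s, ∀ y ∈ s, dist x y < δ → f (t • x + (1 - t) • y) ≤ t * f x + (1 - t) * f y

noncomputable def tConvexScaleGain (t : ℝ) : ℝ := (1 - t * (1 - t)) / max t (1 - t)

lemma one_lt_tConvexScaleGain {t : ℝ} (ht : t ∈ Ioo (0 : ℝ) 1) : 1 < tConvexScaleGain t := by
  obtain ⟨ht0, ht1⟩ := ht
  rw [tConvexScaleGain, one_lt_div (lt_max_of_lt_left ht0)]
  rcases max_cases t (1 - t) with ⟨hmax, -⟩ | ⟨hmax, -⟩ <;> rw [hmax] <;> nlinarith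

lemma exists_tConvex_triangle {t : ℝ} (ht : t ∈ Ioo (0 : ℝ) 1) (x y : E) :
    ∃ u ∈ segment ℝ x y, ∃ v ∈ segment ℝ x y,
      t • x + (1 - t) • v = u ∧ t • u + (1 - t) • y = v ∧
      t • v + (1 - t) • u = t • x + (1 - t) • y ∧
      tConvexScaleGain t * dist x v ≤ dist x y ∧ tConvexScaleGain t * dist u y ≤ dist x y ∧
      tConvexScaleGain t * dist u v ≤ dist x y := by
  obtain ⟨ht0, ht1⟩ := ht
  obtain ⟨D, hD_def⟩ : ∃ D, D = 1 - t * (1 - t) := ⟨_, rfl⟩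
  set M := max t (1 - t)
  have hD : 0 < D := by nlinarith
  have hM : 0 < M := lt_max_of_lt_left ht0
  have hdist : ∀ {a b : E} (c : ℝ), 0 ≤ c → c ≤ M → a - b = (c / D) • (x - y) →
      tConvexScaleGain t * dist a b ≤ dist x y := by
    intro a b c hc0 hcM hab
    rw [dist_eq_norm, hab, norm_smul, Real.norm_of_nonneg (by positivity), ← dist_eq_norm,
      tConvexScaleGain, ← hD_def]
    calc D / M * (c / D * dist x y) = c / M * dist x y := by field_simp
      _ ≤ dist x y := mul_le_of_le_one_left dist_nonneg ((div_le_one hM).2 hcM)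
  set u := (t / D) • x + ((1 - t) ^ 2 / D) • y
  set v := (t ^ 2 / D) • x + ((1 - t) / D) • y
  have hu : u ∈ segment ℝ x y :=
    ⟨_, _, by positivity, by positivity, by field_simp; rw [hD_def]; ring, rfl⟩
  have hv : v ∈ segment ℝ x y :=
    ⟨_, _, by positivity, by positivity, by field_simp; rw [hD_def]; ring, rfl⟩
  refine ⟨u, hu, v, hv, ?_, ?_, ?_, hdist (1 - t) (by linarith) (le_max_right _ _) ?_,
    hdist t ht0.le (le_max_left _ _) ?_,
    hdist (t * (1 - t)) (by nlinarith)
      ((mul_le_of_le_one_right ht0.le (by linarith : 1 - t ≤ 1)).trans (le_max_left _ _)) ?_⟩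
  all_goals subst hD_def; match_scalars <;> field_simp <;> ring

lemma TConvexOnScale.mul_tConvexScaleGain {t δ : ℝ} {s : Set E} {f : E → ℝ}
    (hs : Convex ℝ s) (ht : t ∈ Ioo (0 : ℝ) 1) (hf : TConvexOnScale t δ s f) :
    TConvexOnScale t (tConvexScaleGain t * δ) s f := by
  intro x hx y hy hxy
  have hgain : 0 < tConvexScaleGain t := one_pos.trans (one_lt_tConvexScaleGain ht)
  have shorter : ∀ {a b : E}, tConvexScaleGain t * dist a b ≤ dist x y → dist a b < δ :=
    fun h => lt_of_mul_lt_mul_left (h.trans_lt hxy) hgain.le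
  obtain ⟨u, hu, v, hv, hxv, huy, hvu, dxv, duy, duv⟩ := exists_tConvex_triangle ht x y
  have hu := hs.segment_subset hx hy hu
  have hv := hs.segment_subset hx hy hv
  have h₁ := hf x hx v hv (shorter dxv)
  have h₂ := hf u hu y hy (shorter duy)
  have h₃ := hf v hv u hu (shorter (by rwa [dist_comm]))
  rw [hxv] at h₁
  rw [huy] at h₂
  rw [hvu] at h₃
  linarith

lemma TConvexOnScale.tConvexOn {t δ : ℝ} {s : Set E} {f : E → ℝ}
    (hs : Convex ℝ s) (ht : t ∈ Ioo (0 : ℝ) 1) (hδ : 0 < δ) (hf : TConvexOnScale t δ s f) :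
    TConvexOn t s f := by
  have hscale : ∀ n : ℕ, TConvexOnScale t (tConvexScaleGain t ^ n * δ) s f := by
    intro n
    induction n with
    | zero => simpa using hf
    | succ n ih => simpa [pow_succ', mul_assoc] using ih.mul_tConvexScaleGain hs ht
  intro x hx y hy
  obtain ⟨n, hn⟩ := pow_unbounded_of_one_lt (dist x y / δ) (one_lt_tConvexScaleGain ht)
  exact hscale n x hx y hy ((div_lt_iff₀ hδ).1 hn)

lemma exists_tConvexOnScale_of_isCompact {t : ℝ} {s K : Set E} {f : E → ℝ}
    (hK : IsCompact K) (hKs : K ⊆ s)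
    (hloc : ∀ p ∈ s, ∃ U : Set E, IsOpen U ∧ p ∈ U ∧ TConvexOn t (s ∩ U) f) :
    ∃ δ > 0, TConvexOnScale t δ K f := by
  choose U hUopen hpU hU using hloc
  obtain ⟨δ, hδ, hball⟩ := lebesgue_number_lemma_of_metric hK (fun p : s => hUopen p p.2)
    fun z hz => mem_iUnion.2 ⟨⟨z, hKs hz⟩, hpU z (hKs hz)⟩
  refine ⟨δ, hδ, fun x hx y hy hxy => ?_⟩
  obtain ⟨p, hp⟩ := hball x hx
  exact hU p p.2 x ⟨hKs hx, hp (mem_ball_self hδ)⟩ y ⟨hKs hy, hp (mem_ball'.2 hxy)⟩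

lemma Convex.tConvexOn_of_locally {t : ℝ} {s : Set E} {f : E → ℝ}
    (hs : Convex ℝ s) (ht : t ∈ Ioo (0 : ℝ) 1)
    (hloc : ∀ p ∈ s, ∃ U : Set E, IsOpen U ∧ p ∈ U ∧ TConvexOn t (s ∩ U) f) :
    TConvexOn t s f := by
  intro x hx y hy
  have hcompact : IsCompact (segment ℝ x y) := by
    rw [segment_eq_image]
    exact isCompact_Icc.image (by fun_prop)
  obtain ⟨δ, hδ, hf⟩ :=
    exists_tConvexOnScale_of_isCompact hcompact (hs.segment_subset hx hy) hloc
  exact hf.tConvexOn (convex_segment x y) ht hδ x (left_mem_segment ℝ x y)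
    y (right_mem_segment ℝ x y)

theorem stmt_1 (t : ℝ) (ht : t ∈ Set.Ioo (0:ℝ) 1)
    (I : Set ℝ) (hord : I.OrdConnected) (f : ℝ → ℝ)
    (h : ∀ p ∈ I, ∃ U : Set ℝ, IsOpen U ∧ p ∈ U ∧
      ∀ x ∈ I ∩ U, ∀ y ∈ I ∩ U, f (t*x + (1-t)*y) ≤ t * f x + (1-t) * f y) :
    ∀ x ∈ I, ∀ y ∈ I, f (t*x + (1-t)*y) ≤ t * f x + (1-t) * f y :=
  hord.convex.tConvexOn_of_locally ht (by simpa only [TConvexOn, smul_eq_mul] using h)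
end

section
/- Let t ∈ (0,1) and let I ⊆ ℝ be a nonempty open interval. If f : I → ℝ satisfies f(tx + (1-t)y) = t·f(x) + (1-t)·f(y) for all x, y ∈ I with x ≤ y, then f satisfies f(tx + (1-t)y) = t·f(x) + (1-t)·f(y) for all x, y ∈ I (without the order restriction). -/
/-!
Write `Δ(y, d) = f (y + d) - f y`. For `y < x = y + d` the claim is `Δ(y, t d) = t Δ(y, d)`.
Applying the hypothesis at `y ≤ y + d` gives `Δ(y, (1-t) d) = (1-t) Δ(y, d)`, so both sides of the
claim scale by `(1-t)^n` when `d` is replaced by `(1-t)^n d`, and it suffices to prove the claim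
for small `d`. Combining the hypothesis at three pairs of points shows that `Δ(x, t h) = t Δ(z, h)`
whenever `z + h ≤ x`; for small `d` the openness of `I` leaves room to the left of `y` to apply this
with `x = y` and with `x = y - d`, which yields the claim.
-/

open Filter Topology

def IsNonsymmTAffineOn (t : ℝ) (I : Set ℝ) (f : ℝ → ℝ) : Prop :=
  ∀ x ∈ I, ∀ y ∈ I, x ≤ y → f (t * x + (1 - t) * y) = t * f x + (1 - t) * f y

namespace IsNonsymmTAffineOn

variable {t : ℝ} {I : Set ℝ} {f : ℝ → ℝ}

theorem increment_one_sub_mul (hf : IsNonsymmTAffineOn t I f) {z s : ℝ} (hz : z ∈ I)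
    (hs : z + s ∈ I) (hs0 : 0 ≤ s) :
    f (z + (1 - t) * s) - f z = (1 - t) * (f (z + s) - f z) := by
  have := hf z hz (z + s) hs (by linarith)
  rw [show t * z + (1 - t) * (z + s) = z + (1 - t) * s by ring] at this
  linear_combination this

theorem increment_one_sub_pow_mul (hf : IsNonsymmTAffineOn t I f) (hI : I.OrdConnected)
    (ht0 : 0 ≤ t) (ht1 : t ≤ 1) {z s : ℝ} (hz : z ∈ I) (hs : z + s ∈ I) (hs0 : 0 ≤ s) (n : ℕ) :
    f (z + (1 - t) ^ n * s) - f z = (1 - t) ^ n * (f (z + s) - f z) := by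
  induction n with
  | zero => simp
  | succ n ih =>
    have hpow0 : 0 ≤ (1 - t) ^ n := pow_nonneg (by linarith) n
    have hpow1 : (1 - t) ^ n ≤ 1 := pow_le_one₀ (by linarith) (by linarith)
    have hmem : z + (1 - t) ^ n * s ∈ I :=
      hI.out hz hs ⟨by nlinarith, by nlinarith⟩
    have step := hf.increment_one_sub_mul hz hmem (mul_nonneg hpow0 hs0)
    rw [← mul_assoc, ← pow_succ'] at step
    linear_combination step + (1 - t) * ih

theorem increment_mul_eq (hf : IsNonsymmTAffineOn t I f) (hI : I.OrdConnected)
    (ht0 : 0 ≤ t) (ht1 : t < 1) {z h x : ℝ} (hz : z ∈ I) (hx : x ∈ I) (hh : 0 ≤ h)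
    (hzx : z + h ≤ x) (hxh : x + t * h ∈ I) :
    f (x + t * h) - f x = t * (f (z + h) - f z) := by
  have hy : z + h ∈ I := hI.out hz hx ⟨by linarith, hzx⟩
  set b := t * z + (1 - t) * (z + h)
  have hbz : z ≤ b := by nlinarith
  have hby : b ≤ z + h := by nlinarith
  have hb : b ∈ I := hI.out hz hy ⟨hbz, hby⟩
  have e₁ := hf z hz (z + h) hy (by linarith)
  have e₂ := hf b hb x hx (hby.trans hzx)
  have e₃ := hf z hz (x + t * h) hxh (by nlinarith)
  rw [show t * b + (1 - t) * x = t * z + (1 - t) * (x + t * h) by ring, e₃, e₁] at e₂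
  have key : (1 - t) * (f (x + t * h) - f x - t * (f (z + h) - f z)) = 0 := by
    linear_combination e₂
  simpa [sub_eq_zero, (by linarith : 1 - t ≠ 0)] using key

theorem increment_mul_of_mem (hf : IsNonsymmTAffineOn t I f) (hI : I.OrdConnected)
    (ht0 : 0 < t) (ht1 : t < 1) {y e : ℝ} (hy : y ∈ I) (he : 0 ≤ e) (hye : y + e ∈ I)
    (hleft : y - e - e / t ∈ I) :
    f (y + t * e) - f y = t * (f (y + e) - f y) := by
  have hd : 0 ≤ e / t := div_nonneg he ht0.le
  have hyme : y - e ∈ I := hI.out hleft hy ⟨by linarith, by linarith⟩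
  have htd : t * (e / t) = e := by field_simp
  have hyte : y + t * e ∈ I := hI.out hy hye ⟨by nlinarith, by nlinarith⟩
  have left := hf.increment_mul_eq hI ht0.le ht1 hyme hy he (by linarith) hyte
  have right := hf.increment_mul_eq hI ht0.le ht1 hleft hy hd (by linarith)
    (by rwa [htd])
  have shifted := hf.increment_mul_eq hI ht0.le ht1 hleft hyme hd (by rw [sub_add_cancel])
    (by rwa [htd, sub_add_cancel])
  simp only [htd, sub_add_cancel] at left right shifted
  linear_combination left + t * shifted - t * right

theorem increment_mul_of_isOpen (hf : IsNonsymmTAffineOn t I f) (hI : I.OrdConnected)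
    (hIo : IsOpen I) (ht0 : 0 < t) (ht1 : t < 1) {y d : ℝ} (hy : y ∈ I) (hd : 0 ≤ d)
    (hyd : y + d ∈ I) :
    f (y + t * d) - f y = t * (f (y + d) - f y) := by
  have hlim : Tendsto (fun n : ℕ ↦ y - (1 - t) ^ n * d - (1 - t) ^ n * d / t) atTop (𝓝 y) := by
    have hpow := tendsto_pow_atTop_nhds_zero_of_lt_one (by linarith : 0 ≤ 1 - t) (by linarith)
    simpa using ((hpow.mul_const d).const_sub y).sub ((hpow.mul_const d).div_const t)
  obtain ⟨n, hn⟩ := (hlim.eventually (hIo.mem_nhds hy)).exists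
  set q := (1 - t) ^ n
  have hq0 : 0 < q := pow_pos (by linarith) n
  have hq1 : q ≤ 1 := pow_le_one₀ (by linarith) (by linarith)
  have hytd : y + t * d ∈ I := hI.out hy hyd ⟨by nlinarith, by nlinarith⟩
  have small := hf.increment_mul_of_mem hI ht0 ht1 hy (by positivity)
    (hI.out hy hyd ⟨by nlinarith, by nlinarith⟩) hn
  have scale_td := hf.increment_one_sub_pow_mul hI ht0.le ht1.le hy hytd (by positivity) n
  have scale_d := hf.increment_one_sub_pow_mul hI ht0.le ht1.le hy hyd hd n
  rw [show q * (t * d) = t * (q * d) by ring] at scale_td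
  have key : q * (f (y + t * d) - f y - t * (f (y + d) - f y)) = 0 := by
    linear_combination small - scale_td + t * scale_d
  simpa [sub_eq_zero, hq0.ne'] using key

end IsNonsymmTAffineOn

theorem stmt_2_general (t : ℝ) (ht : t ∈ Set.Ioo (0:ℝ) 1)
    (I : Set ℝ) (hI : IsOpen I) (hord : I.OrdConnected)
    (f : ℝ → ℝ)
    (h : ∀ x ∈ I, ∀ y ∈ I, x ≤ y → f (t*x + (1-t)*y) = t * f x + (1-t) * f y) :
    ∀ x ∈ I, ∀ y ∈ I, f (t*x + (1-t)*y) = t * f x + (1-t) * f y := by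
  intro x hx y hy
  rcases le_or_gt x y with hxy | hyx
  · exact h x hx y hy hxy
  · have key := IsNonsymmTAffineOn.increment_mul_of_isOpen h hord hI ht.1 ht.2 hy
      (sub_nonneg.2 hyx.le) (by rwa [add_sub_cancel])
    rw [add_sub_cancel] at key
    rw [show t * x + (1 - t) * y = y + t * (x - y) by ring]
    linear_combination key

theorem stmt_2 (t : ℝ) (ht : t ∈ Set.Ioo (0:ℝ) 1)
    (I : Set ℝ) (hI : IsOpen I) (hne : I.Nonempty) (hord : I.OrdConnected)
    (f : ℝ → ℝ)
    (h : ∀ x ∈ I, ∀ y ∈ I, x ≤ y → f (t*x + (1-t)*y) = t * f x + (1-t) * f y) :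
    ∀ x ∈ I, ∀ y ∈ I, f (t*x + (1-t)*y) = t * f x + (1-t) * f y :=
  stmt_2_general t ht I hI hord f h
end

section
/- Let t ∈ (0,1), let I ⊆ ℝ be an interval with nonempty interior, and let f : I → ℝ be t-affine, i.e., f(tx + (1-t)y) = t·f(x) + (1-t)·f(y) for all x, y ∈ I. Suppose A : ℝ → ℝ is additive and b ∈ ℝ are such that f(x) = A(x) + b for all x ∈ I. Then A(t·v) = t·A(v) for all v ∈ ℝ. -/
/-! The defect `D x = A (t * x) - t * A x` is again additive, and the `t`-affine equation says
exactly that `D x = D y` for `x, y ∈ I`. An additive map that is constant on a set with nonempty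
interior vanishes near `0`, and since every `v` is `n • (v / n)` with `v / n` arbitrarily small,
it vanishes everywhere. -/

open Filter Topology

namespace AddMonoidHom

theorem eq_zero_of_eventually_eq_zero {E F : Type*} [AddCommGroup E] [Module ℝ E]
    [TopologicalSpace E] [ContinuousSMul ℝ E] [AddCommGroup F] (g : E →+ F)
    (hg : ∀ᶠ x in 𝓝 0, g x = 0) : g = 0 := by
  ext v
  have hsmall : Tendsto (fun n : ℕ => (n : ℝ)⁻¹ • v) atTop (𝓝 0) := by
    simpa using (tendsto_inv_atTop_nhds_zero_nat (𝕜 := ℝ)).smul_const v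
  obtain ⟨n, hn, hn0⟩ := ((hsmall.eventually hg).and (eventually_ne_atTop 0)).exists
  calc g v = g (n • (n : ℝ)⁻¹ • v) := by
        rw [← Nat.cast_smul_eq_nsmul ℝ, smul_smul, mul_inv_cancel₀ (by exact_mod_cast hn0),
          one_smul]
    _ = 0 := by rw [map_nsmul, hn, smul_zero]

theorem eventually_eq_zero_of_forall_mem_eq {E F : Type*} [AddCommGroup E] [TopologicalSpace E]
    [IsTopologicalAddGroup E] [AddCommGroup F] (g : E →+ F) {s : Set E}
    (hs : (interior s).Nonempty) (hg : ∀ x ∈ s, ∀ y ∈ s, g x = g y) :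
    ∀ᶠ h in 𝓝 0, g h = 0 := by
  obtain ⟨x₀, hx₀⟩ := hs
  have hnear : ∀ᶠ h in 𝓝 0, x₀ + h ∈ s := by
    have : Tendsto (x₀ + ·) (𝓝 0) (𝓝 x₀) := by
      simpa using (continuous_const_add x₀).tendsto 0
    exact this.eventually (mem_interior_iff_mem_nhds.mp hx₀)
  filter_upwards [hnear] with h hh
  simpa [map_add] using hg _ hh _ (interior_subset hx₀)

theorem eq_zero_of_forall_mem_eq {E F : Type*} [AddCommGroup E] [Module ℝ E]
    [TopologicalSpace E] [IsTopologicalAddGroup E] [ContinuousSMul ℝ E] [AddCommGroup F]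
    (g : E →+ F) {s : Set E} (hs : (interior s).Nonempty)
    (hg : ∀ x ∈ s, ∀ y ∈ s, g x = g y) : g = 0 :=
  g.eq_zero_of_eventually_eq_zero (g.eventually_eq_zero_of_forall_mem_eq hs hg)

theorem map_mul_sub_mul_map_eq_of_affine (A : ℝ →+ ℝ) {t x y b : ℝ}
    (h : A (t * x + (1 - t) * y) + b = t * (A x + b) + (1 - t) * (A y + b)) :
    A (t * x) - t * A x = A (t * y) - t * A y := by
  have hy : A y = A (t * y) + A ((1 - t) * y) := by
    rw [← map_add]; congr 1; ring
  rw [map_add] at h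
  linarith

end AddMonoidHom

theorem stmt_3 (t : ℝ) (ht : t ∈ Set.Ioo (0:ℝ) 1)
    (I : Set ℝ) (hord : I.OrdConnected) (hint : (interior I).Nonempty)
    (f : ℝ → ℝ)
    (haff : ∀ x ∈ I, ∀ y ∈ I, f (t*x + (1-t)*y) = t * f x + (1-t) * f y)
    (A : ℝ → ℝ) (hA : ∀ u v : ℝ, A (u + v) = A u + A v) (b : ℝ)
    (hrep : ∀ x ∈ I, f x = A x + b) :
    ∀ v : ℝ, A (t * v) = t * A v := by
  obtain ⟨ht0, ht1⟩ := ht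
  let A' : ℝ →+ ℝ := AddMonoidHom.mk' A hA
  let D : ℝ →+ ℝ := A'.comp (AddMonoidHom.mulLeft t) - t • A'
  have hD : ∀ x, D x = A (t * x) - t * A x := fun _ => rfl
  have hconst : ∀ x ∈ I, ∀ y ∈ I, D x = D y := by
    intro x hx y hy
    have hmid : t * x + (1 - t) * y ∈ I :=
      hord.convex hx hy ht0.le (by linarith) (by ring)
    rw [hD, hD]
    refine A'.map_mul_sub_mul_map_eq_of_affine (b := b) ?_
    change A _ + b = t * (A x + b) + (1 - t) * (A y + b)
    rw [← hrep _ hmid, ← hrep _ hx, ← hrep _ hy]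
    exact haff x hx y hy
  intro v
  have hv := DFunLike.congr_fun (D.eq_zero_of_forall_mem_eq hint hconst) v
  rw [hD, AddMonoidHom.zero_apply, sub_eq_zero] at hv
  exact hv
end

section
/- Let t ∈ [0,1] and let I ⊆ ℝ be any interval (possibly containing its endpoints, possibly unbounded). If f : I → ℝ satisfies f(tx + (1-t)y) = t·f(x) + (1-t)·f(y) for all x, y ∈ I with x ≤ y, then f satisfies the same equation for all x, y ∈ I without any order restriction. -/
/-!
Restricting `f` to a segment `[y, x]` of `I` and rescaling it to `[0, 1]` reduces the reversed
equation to `f t = t f 1 + u f 0` with `u = 1 - t`. The ordered equation at the pairs `0 ≤ 1`,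
`0 ≤ u`, `t ≤ 1` and `u² ≤ t² + u` (whose `t`-combination is again `u`) evaluates `f u` in two
ways, and comparing them gives `t u (f t - t f 1 - u f 0) = 0`.
-/

open Set

variable {𝕜 E : Type*} [Field 𝕜] [LinearOrder 𝕜] [AddCommGroup E] [Module 𝕜 E]

def NonsymmAffineOn (t : 𝕜) (s : Set 𝕜) (f : 𝕜 → E) : Prop :=
  ∀ x ∈ s, ∀ y ∈ s, x ≤ y → f (t * x + (1 - t) * y) = t • f x + (1 - t) • f y

namespace NonsymmAffineOn

variable {t : 𝕜} {s s' : Set 𝕜} {f : 𝕜 → E}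

theorem mono (hf : NonsymmAffineOn t s f) (hs : s' ⊆ s) : NonsymmAffineOn t s' f :=
  fun x hx y hy hxy => hf x (hs hx) y (hs hy) hxy

variable [IsStrictOrderedRing 𝕜]

theorem comp_affine (hf : NonsymmAffineOn t s f) (c : 𝕜) {a : 𝕜} (ha : 0 ≤ a) :
    NonsymmAffineOn t ((fun r => c + r * a) ⁻¹' s) (fun r => f (c + r * a)) := by
  intro x hx y hy hxy
  have hcomb : c + (t * x + (1 - t) * y) * a = t * (c + x * a) + (1 - t) * (c + y * a) := by ring
  have hle : c + x * a ≤ c + y * a := by gcongr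
  simp only [hcomb]
  exact hf _ hx _ hy hle

theorem apply_one_zero (hf : NonsymmAffineOn t (Icc 0 1) f) (ht₀ : 0 < t) (ht₁ : t < 1) :
    f t = t • f 1 + (1 - t) • f 0 := by
  have hu₀ : 0 < 1 - t := by linarith
  have mem : ∀ {r : 𝕜}, 0 ≤ r → r ≤ 1 → r ∈ Icc (0 : 𝕜) 1 := fun h₀ h₁ => ⟨h₀, h₁⟩
  have h₁ := hf 0 (mem le_rfl zero_le_one) 1 (mem zero_le_one le_rfl) zero_le_one
  have h₂ := hf 0 (mem le_rfl zero_le_one) (1 - t) (mem hu₀.le (by linarith)) hu₀.le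
  have h₃ := hf t (mem ht₀.le ht₁.le) 1 (mem zero_le_one le_rfl) ht₁.le
  simp only [mul_zero, zero_add, mul_one] at h₁ h₂ h₃
  have h₄ := hf ((1 - t) * (1 - t)) (mem (by positivity) (by nlinarith)) (t * t + (1 - t))
    (mem (by positivity) (by nlinarith)) (by nlinarith)
  rw [show t * ((1 - t) * (1 - t)) + (1 - t) * (t * t + (1 - t)) = 1 - t by ring,
    h₁, h₂, h₃, h₁] at h₄
  have key : (t * (1 - t)) • (f t - (t • f 1 + (1 - t) • f 0)) = 0 := by
    linear_combination (norm := module) (-1 : 𝕜) • h₄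
  have htu : t * (1 - t) ≠ 0 := (mul_pos ht₀ hu₀).ne'
  exact sub_eq_zero.mp ((smul_eq_zero.mp key).resolve_left htu)

theorem apply_of_ge (hf : NonsymmAffineOn t s f) (hs : s.OrdConnected) (ht₀ : 0 < t)
    (ht₁ : t < 1) {x y : 𝕜} (hx : x ∈ s) (hy : y ∈ s) (hyx : y ≤ x) :
    f (t * x + (1 - t) * y) = t • f x + (1 - t) • f y := by
  have hseg : Icc 0 1 ⊆ (fun r => y + r * (x - y)) ⁻¹' s := fun r hr =>
    hs.out hy hx ⟨by nlinarith [hr.1], by nlinarith [hr.2]⟩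
  have h := ((hf.comp_affine y (sub_nonneg.2 hyx)).mono hseg).apply_one_zero ht₀ ht₁
  simp only [one_mul, zero_mul, add_zero, add_sub_cancel] at h
  rwa [show y + t * (x - y) = t * x + (1 - t) * y by ring] at h

theorem apply (hf : NonsymmAffineOn t s f) (hs : s.OrdConnected) (ht : t ∈ Icc 0 1)
    {x y : 𝕜} (hx : x ∈ s) (hy : y ∈ s) :
    f (t * x + (1 - t) * y) = t • f x + (1 - t) • f y := by
  rcases le_total x y with hxy | hyx
  · exact hf x hx y hy hxy
  rcases ht.1.eq_or_lt with rfl | ht₀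
  · simp
  rcases ht.2.eq_or_lt with rfl | ht₁
  · simp
  exact hf.apply_of_ge hs ht₀ ht₁ hx hy hyx

end NonsymmAffineOn

theorem stmt_7 (t : ℝ) (ht : t ∈ Set.Icc (0:ℝ) 1)
    (I : Set ℝ) (hord : I.OrdConnected) (f : ℝ → ℝ)
    (h : ∀ x ∈ I, ∀ y ∈ I, x ≤ y → f (t*x + (1-t)*y) = t * f x + (1-t) * f y) :
    ∀ x ∈ I, ∀ y ∈ I, f (t*x + (1-t)*y) = t * f x + (1-t) * f y :=
  fun _ hx _ hy => NonsymmAffineOn.apply h hord ht hx hy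
end

section
/- Let t ∈ (0,1), let I ⊆ ℝ be an interval, and let f : I → ℝ be t-affine, i.e., f(tx + (1-t)y) = t·f(x) + (1-t)·f(y) for all x, y ∈ I. Then f is Jensen-affine: f((x + y)/2) = (f(x) + f(y))/2 for all x, y ∈ I. -/
/-!
Write `m` for the midpoint of `x` and `y`. Applying `t`-affinity to the points
`t x + (1 - t) m` and `t m + (1 - t) y` lands at `t² x + 2t(1 - t) m + (1 - t)² y`, which is
`t x + (1 - t) y` again. Expanding `f` of this point in two ways gives
`t f x + (1 - t) f y = t² f x + 2t(1 - t) f m + (1 - t)² f y`, and since `2t(1 - t) ≠ 0` this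
forces `f m = (f x + f y) / 2`.
-/

open Set

section
variable {𝕜 E F : Type*} [Field 𝕜] [LinearOrder 𝕜] [IsStrictOrderedRing 𝕜]
  [AddCommGroup E] [Module 𝕜 E] [AddCommGroup F] [Module 𝕜 F]

theorem smul_add_smul_comp_midpoint (t : 𝕜) (x y : E) :
    t • (t • x + (1 - t) • midpoint 𝕜 x y) + (1 - t) • (t • midpoint 𝕜 x y + (1 - t) • y) =
      t • x + (1 - t) • y := by
  rw [midpoint_eq_smul_add, invOf_eq_inv]
  module

theorem midpoint_eq_of_smul_add_smul_eq {t : 𝕜} (ht : t ∈ Ioo 0 1) {a b m : F}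
    (h : t • a + (1 - t) • b = t • (t • a + (1 - t) • m) + (1 - t) • (t • m + (1 - t) • b)) :
    m = midpoint 𝕜 a b := by
  have hscaled : (2 * t * (1 - t)) • (m - midpoint 𝕜 a b) = 0 := by
    rw [midpoint_eq_smul_add, invOf_eq_inv]
    linear_combination (norm := module) -h
  have hcoeff : 2 * t * (1 - t) ≠ 0 := by
    have := ht.1
    have := ht.2
    positivity
  exact sub_eq_zero.mp ((smul_eq_zero.mp hscaled).resolve_left hcoeff)

theorem Convex.map_midpoint_of_smul_add_smul {s : Set E} (hs : Convex 𝕜 s) {t : 𝕜}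
    (ht : t ∈ Ioo 0 1) {f : E → F}
    (haff : ∀ x ∈ s, ∀ y ∈ s, f (t • x + (1 - t) • y) = t • f x + (1 - t) • f y)
    {x y : E} (hx : x ∈ s) (hy : y ∈ s) :
    f (midpoint 𝕜 x y) = midpoint 𝕜 (f x) (f y) := by
  have hm : midpoint 𝕜 x y ∈ s := hs.midpoint_mem hx hy
  have hcomb : ∀ a ∈ s, ∀ b ∈ s, t • a + (1 - t) • b ∈ s := fun a ha b hb =>
    hs ha hb ht.1.le (sub_nonneg.mpr ht.2.le) (add_sub_cancel t 1)
  apply midpoint_eq_of_smul_add_smul_eq ht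
  rw [← haff x hx _ hm, ← haff _ hm y hy, ← haff _ (hcomb x hx _ hm) _ (hcomb _ hm y hy),
    smul_add_smul_comp_midpoint, haff x hx y hy]

end

theorem stmt_9 (t : ℝ) (ht : t ∈ Set.Ioo (0:ℝ) 1)
    (I : Set ℝ) (hord : I.OrdConnected) (f : ℝ → ℝ)
    (haff : ∀ x ∈ I, ∀ y ∈ I, f (t*x + (1-t)*y) = t * f x + (1-t) * f y) :
    ∀ x ∈ I, ∀ y ∈ I, f ((x + y)/2) = (f x + f y)/2 := by
  intro x hx y hy
  have h := hord.convex.map_midpoint_of_smul_add_smul ht haff hx hy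
  simpa only [midpoint_eq_smul_add, invOf_eq_inv, smul_eq_mul, inv_mul_eq_div] using h
end

section
/- Let t ∈ (0,1), let α ∈ ℝ, and let I ⊆ ℝ be an interval with left endpoint α ∈ I and nonempty interior. Suppose f : I → ℝ satisfies f(tx + (1-t)y) = t·f(x) + (1-t)·f(y) for all x, y ∈ I with x ≤ y, and there exist an additive function A : ℝ → ℝ with A(t·v) = t·A(v) for all v ∈ ℝ, and b ∈ ℝ, with f(x) = A(x) + b for all interior points x of I. Then f(α) = A(α) + b. -/
/-! Pick an interior point `u`. The point `t α + (1 - t) u` is interior too, so evaluating the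
equation at `(α, u)` and comparing with the representation there leaves `t f(α) = t (A(α) + b)`. -/

lemma map_one_sub_mul_of_map_mul {A : ℝ → ℝ} (hA : ∀ u v : ℝ, A (u + v) = A u + A v) {t : ℝ}
    (hAt : ∀ v : ℝ, A (t * v) = t * A v) (v : ℝ) : A ((1 - t) * v) = (1 - t) * A v := by
  have hsplit := hA (t * v) ((1 - t) * v)
  rw [show t * v + (1 - t) * v = v by ring, hAt] at hsplit
  linarith

lemma Convex.mul_add_one_sub_mul_mem_interior {I : Set ℝ} (hI : Convex ℝ I) {α u t : ℝ}
    (hα : α ∈ I) (hu : u ∈ interior I) (ht : t ∈ Set.Ioo (0 : ℝ) 1) :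
    t * α + (1 - t) * u ∈ interior I := by
  have hmem := hI.combo_interior_closure_mem_interior hu (subset_closure hα)
    (sub_pos.mpr ht.2) ht.1.le (sub_add_cancel 1 t)
  rwa [smul_eq_mul, smul_eq_mul, add_comm] at hmem

theorem stmt_10 (t : ℝ) (ht : t ∈ Set.Ioo (0:ℝ) 1)
    (α : ℝ) (I : Set ℝ) (hord : I.OrdConnected)
    (hα : α ∈ I) (hleft : ∀ x ∈ I, α ≤ x) (hint : (interior I).Nonempty)
    (f : ℝ → ℝ)
    (h : ∀ x ∈ I, ∀ y ∈ I, x ≤ y → f (t*x + (1-t)*y) = t * f x + (1-t) * f y)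
    (A : ℝ → ℝ) (hA : ∀ u v : ℝ, A (u + v) = A u + A v)
    (hAt : ∀ v : ℝ, A (t * v) = t * A v) (b : ℝ)
    (hrep : ∀ x ∈ interior I, f x = A x + b) :
    f α = A α + b := by
  obtain ⟨u, hu⟩ := hint
  have huI : u ∈ I := interior_subset hu
  have hcombo : t * α + (1 - t) * u ∈ interior I :=
    hord.convex.mul_add_one_sub_mul_mem_interior hα hu ht
  have hboth : t * f α + (1 - t) * f u = t * (A α + b) + (1 - t) * (A u + b) := by
    rw [← h α hα u huI (hleft u huI), hrep _ hcombo, hA, hAt,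
      map_one_sub_mul_of_map_mul hA hAt]
    ring
  rw [hrep u hu, add_left_inj] at hboth
  exact mul_left_cancel₀ ht.1.ne' hboth
end
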